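/- arXiv:2404.19564 — 2 statements merged into one kernel-verified Lean document; each statement's English description precedes it below -/
import Mathlib

section
/- Let R ⊆ ℤ² be a finite simply connected region and let c be a corner of R. Then for any two vertices u, v ∈ R \ {c}, the graph distance between u and v in the subgraph induced on R \ {c} equals the graph distance between u and v in the subgraph induced on R. -/
/-!
If a shortest walk in `R` passes through the corner `c`, it enters from a neighbour `a` and
leaves to a neighbour `b`. If `a = b` the detour `a, c, a` can be cut out; otherwise `a` and `b`
have a common neighbour `w ≠ c` in `R`, and `a, c, b` can be replaced by `a, w, b`. Repeating
this along the walk removes every visit to `c` without making the walk longer.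
-/

/-- The grid graph on ℤ²: two vertices are adjacent iff their Manhattan distance is 1. -/
def gridGraph : SimpleGraph (ℤ × ℤ) where
  Adj a b := (a.1 - b.1).natAbs + (a.2 - b.2).natAbs = 1
  symm := ⟨by intro a b h; omega⟩
  loopless := ⟨by intro a h; omega⟩

/-- The set of neighbors of `v` (in the grid graph) lying in `R`. -/
def nbrsIn (R : Set (ℤ × ℤ)) (v : ℤ × ℤ) : Set (ℤ × ℤ) :=
  {u | u ∈ R ∧ gridGraph.Adj v u}

/-- `R` is simply connected: both `R` and its complement induce connected subgraphs. -/
def SimplyConnected (R : Set (ℤ × ℤ)) : Prop :=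
  (gridGraph.induce R).Connected ∧ (gridGraph.induce Rᶜ).Connected

/-- `v` is a corner of `R`: either it has at most one neighbor in `R`, or it has exactly
two neighbors `u, u'` in `R` and they have a common grid-neighbor `w ∈ R` distinct from `v`. -/
def IsGridCorner (R : Set (ℤ × ℤ)) (v : ℤ × ℤ) : Prop :=
  v ∈ R ∧
    ((nbrsIn R v).ncard ≤ 1 ∨
      ∃ u u' : ℤ × ℤ, u ≠ u' ∧ nbrsIn R v = {u, u'} ∧
        ∃ w : ℤ × ℤ, w ∈ R ∧ w ≠ v ∧ gridGraph.Adj u w ∧ gridGraph.Adj u' w)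

namespace SimpleGraph

variable {V W : Type*}

lemma edist_le_of_forall_walk {G : SimpleGraph V} {H : SimpleGraph W} {a b : V} {a' b' : W}
    (h : ∀ p : G.Walk a b, ∃ q : H.Walk a' b', q.length ≤ p.length) :
    H.edist a' b' ≤ G.edist a b :=
  le_iInf fun p ↦
    let ⟨q, hq⟩ := h p
    (edist_le q).trans (by exact_mod_cast hq)

def IsCorner (G : SimpleGraph V) (s : Set V) (c : V) : Prop :=
  ∀ a ∈ s, ∀ b ∈ s, G.Adj c a → G.Adj c b → a ≠ b →
    ∃ w ∈ s, w ≠ c ∧ G.Adj a w ∧ G.Adj w b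

variable {G : SimpleGraph V} {s : Set V} {c : V}

-- The start may be `c`, which keeps the statement inductive along `p`.
lemma Walk.exists_length_le_tail_support_subset_sdiff (hc : G.IsCorner s c)
    {u v : V} (p : G.Walk u v) (hp : ∀ x ∈ p.support, x ∈ s) (hv : v ≠ c) :
    ∃ q : G.Walk u v, q.length ≤ p.length ∧ ∀ x ∈ q.support.tail, x ∈ s \ {c} := by
  induction p with
  | nil => exact ⟨nil, le_rfl, by simp⟩
  | @cons u x v hux p ih =>
    obtain ⟨q, hqp, hq⟩ := ih (fun y hy ↦ hp y (by simp [hy])) hv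
    by_cases hxc : x = c
    · subst hxc
      cases q with
      | nil => exact absurd rfl hv
      | @cons _ y _ hxy q =>
        simp only [support_cons, List.tail_cons, length_cons] at hq hqp
        by_cases huy : u = y
        · subst huy
          exact ⟨q, by simp only [length_cons]; omega,
            fun z hz ↦ hq z (List.mem_of_mem_tail hz)⟩
        · obtain ⟨w, hws, hwx, huw, hwy⟩ :=
            hc u (hp u (start_mem_support _)) y (hq y q.start_mem_support).1 hux.symm hxy huy
          refine ⟨cons huw (cons hwy q), by simp only [length_cons]; omega, ?_⟩
          simpa [hws, hwx] using hq
    · refine ⟨cons hux q, by simpa using hqp, ?_⟩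
      rw [support_cons, List.tail_cons, ← cons_tail_support]
      exact List.forall_mem_cons.2 ⟨⟨hp x (by simp), hxc⟩, hq⟩

lemma Walk.length_induce {u v : V} (p : G.Walk u v) (hp : ∀ x ∈ p.support, x ∈ s) :
    (p.induce s hp).length = p.length := by
  induction p with
  | nil => rfl
  | cons _ p ih => simp [ih]

lemma Walk.support_map_induce_subset {a b : s} (p : (G.induce s).Walk a b) :
    ∀ x ∈ (p.map (Embedding.induce s).toHom).support, x ∈ s := fun x hx ↦ by
  obtain ⟨y, -, rfl⟩ := List.mem_map.1 (p.support_map _ ▸ hx)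
  exact y.2

theorem edist_induce_sdiff_singleton (hc : G.IsCorner s c) {u v : V}
    (hu : u ∈ s) (hv : v ∈ s) (huc : u ≠ c) (hvc : v ≠ c) :
    (G.induce (s \ {c})).edist ⟨u, Set.mem_sdiff_singleton.2 ⟨hu, huc⟩⟩
        ⟨v, Set.mem_sdiff_singleton.2 ⟨hv, hvc⟩⟩ =
      (G.induce s).edist ⟨u, hu⟩ ⟨v, hv⟩ := by
  refine le_antisymm (edist_le_of_forall_walk fun p ↦ ?_) (edist_le_of_forall_walk fun p ↦
    ⟨p.map (G.induceHomOfLE Set.sdiff_subset).toHom, (Walk.length_map _ _).le⟩)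
  let p' : G.Walk u v := p.map (Embedding.induce s).toHom
  obtain ⟨q, hqp, hq⟩ :=
    p'.exists_length_le_tail_support_subset_sdiff hc p.support_map_induce_subset hvc
  have hq' : ∀ x ∈ q.support, x ∈ s \ {c} := by
    rw [← q.cons_tail_support]
    exact List.forall_mem_cons.2 ⟨Set.mem_sdiff_singleton.2 ⟨hu, huc⟩, hq⟩
  exact ⟨q.induce _ hq',
    (q.length_induce hq').trans_le (hqp.trans_eq (Walk.length_map _ _))⟩

end SimpleGraph

lemma nbrsIn_finite (R : Set (ℤ × ℤ)) (v : ℤ × ℤ) : (nbrsIn R v).Finite :=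
  (Set.finite_Icc (v - (1, 1)) (v + (1, 1))).subset fun x ⟨_, hx⟩ ↦ by
    simp only [gridGraph, Set.mem_Icc, Prod.le_def, Prod.fst_sub, Prod.snd_sub, Prod.fst_add,
      Prod.snd_add] at hx ⊢
    omega

lemma IsGridCorner.isCorner {R : Set (ℤ × ℤ)} {c : ℤ × ℤ} (hc : IsGridCorner R c) :
    gridGraph.IsCorner R c := by
  intro a ha b hb hca hcb hab
  rcases hc.2 with hle | ⟨x, y, -, hxy, w, hwR, hwc, hxw, hyw⟩
  · exact absurd ((Set.ncard_le_one_iff (nbrsIn_finite R c)).1 hle ⟨ha, hca⟩ ⟨hb, hcb⟩) hab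
  · have hadj : ∀ z ∈ nbrsIn R c, gridGraph.Adj z w := by
      rw [hxy]
      rintro z (rfl | rfl) <;> assumption
    exact ⟨w, hwR, hwc, hadj a ⟨ha, hca⟩, (hadj b ⟨hb, hcb⟩).symm⟩

theorem remove_corner_preserves_dist_general (R : Set (ℤ × ℤ))
    (c : ℤ × ℤ) (hc : IsGridCorner R c)
    (u v : ℤ × ℤ) (hu : u ∈ R \ {c}) (hv : v ∈ R \ {c}) :
    (gridGraph.induce (R \ {c})).dist ⟨u, hu⟩ ⟨v, hv⟩ =
      (gridGraph.induce R).dist ⟨u, hu.1⟩ ⟨v, hv.1⟩ :=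
  congrArg ENat.toNat (SimpleGraph.edist_induce_sdiff_singleton hc.isCorner hu.1 hv.1 hu.2 hv.2)

/-- Removing a corner from a finite simply connected region does not change graph
distances between the remaining vertices. -/
theorem remove_corner_preserves_dist (R : Set (ℤ × ℤ)) (hfin : R.Finite)
    (hsc : SimplyConnected R) (c : ℤ × ℤ) (hc : IsGridCorner R c)
    (u v : ℤ × ℤ) (hu : u ∈ R \ {c}) (hv : v ∈ R \ {c}) :
    (gridGraph.induce (R \ {c})).dist ⟨u, hu⟩ ⟨v, hv⟩ =
      (gridGraph.induce R).dist ⟨u, hu.1⟩ ⟨v, hv.1⟩ :=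
  remove_corner_preserves_dist_general R c hc u v hu hv
end

section
/- Let R ⊆ ℤ² be a finite simply connected region and let h be a hall of R, with u and u' its two neighbors in R. Then the subgraph induced on R \ {h} has exactly two connected components, one containing u and the other containing u'; in particular, every connected component of R \ {h} contains a neighbor of h. -/
open SimpleGraph

lemma SimpleGraph.Walk.count_edges_eq_zero_of_notMem_support_left {V : Type*} [DecidableEq V]
    {G : SimpleGraph V} {a b x : V} (C : G.Walk a b) (y : V) (hx : x ∉ C.support) :
    C.edges.count s(x, y) = 0 :=
  List.count_eq_zero.2 fun hxy => hx (C.fst_mem_support_of_mem_edges hxy)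

lemma SimpleGraph.Walk.count_edges_eq_zero_of_notMem_support_right {V : Type*} [DecidableEq V]
    {G : SimpleGraph V} {a b y : V} (C : G.Walk a b) (x : V) (hy : y ∉ C.support) :
    C.edges.count s(x, y) = 0 :=
  List.count_eq_zero.2 fun hxy => hy (C.snd_mem_support_of_mem_edges hxy)

lemma SimpleGraph.exists_adj_reachable_induce_diff_of_walk {V : Type*} {G : SimpleGraph V}
    {S : Set V} {h : V} {a c : S} (W : (G.induce S).Walk a c) (hc : (c : V) = h)
    (ha : (a : V) ∈ S \ {h}) :
    ∃ n, ∃ hn : n ∈ S \ {h}, G.Adj n h ∧ (G.induce (S \ {h})).Reachable ⟨a, ha⟩ ⟨n, hn⟩ := by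
  induction W with
  | nil => exact absurd hc ha.2
  | @cons a b c hab W ih =>
    by_cases hb : (b : V) = h
    · exact ⟨a, ha, hb ▸ hab, .rfl⟩
    · obtain ⟨n, hn, hnh, hbn⟩ := ih hc ⟨b.2, hb⟩
      have hab' : (G.induce (S \ {h})).Adj ⟨a, ha⟩ ⟨b, b.2, hb⟩ := hab
      exact ⟨n, hn, hnh, hab'.reachable.trans hbn⟩

lemma SimpleGraph.Walk.exists_loop_of_adj_of_adj {V : Type*} [DecidableEq V] {G : SimpleGraph V}
    {h u u' : V} (hu : G.Adj h u) (hu' : G.Adj h u') (hne : u ≠ u') (W : G.Walk u u')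
    (hW : h ∉ W.support) :
    ∃ C : G.Walk h h, C.support ⊆ h :: W.support ∧ C.edges.count s(h, u) = 1 := by
  refine ⟨.cons hu (W.concat hu'.symm), ?_, ?_⟩
  · simp only [Walk.support_cons, Walk.support_concat, List.cons_subset, List.mem_cons, true_or,
      true_and]
    exact List.append_subset.2 ⟨List.subset_cons_self _ _, by simp⟩
  · simp [Walk.edges_concat, W.count_edges_eq_zero_of_notMem_support_left _ hW,
      hne.symm, hu.ne]

lemma gridGraph_adj {a b : ℤ × ℤ} :
    gridGraph.Adj a b ↔ (a.1 - b.1).natAbs + (a.2 - b.2).natAbs = 1 := Iff.rfl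

/-- The step `a → b` crosses the horizontal ray running rightwards from the centre
`p + (1/2, 1/2)` of the unit square with lower-left corner `p`. -/
def CrossesRay (p a b : ℤ × ℤ) : Prop :=
  a.1 = b.1 ∧ p.1 < a.1 ∧ ((a.2 = p.2 ∧ b.2 = p.2 + 1) ∨ (a.2 = p.2 + 1 ∧ b.2 = p.2))

instance (p a b : ℤ × ℤ) : Decidable (CrossesRay p a b) := by
  unfold CrossesRay; infer_instance

def crossings (p : ℤ × ℤ) {a b : ℤ × ℤ} (C : gridGraph.Walk a b) : ℕ :=
  C.darts.countP fun d => CrossesRay p d.fst d.snd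

lemma crossings_nil (p a : ℤ × ℤ) : crossings p (Walk.nil : gridGraph.Walk a a) = 0 := rfl

lemma crossings_cons (p : ℤ × ℤ) {a b c : ℤ × ℤ} (hab : gridGraph.Adj a b)
    (C : gridGraph.Walk b c) :
    crossings p (.cons hab C) = crossings p C + if CrossesRay p a b then 1 else 0 := by
  simp [crossings, List.countP_cons]

lemma crossesRay_right_add_mod_two (p a b : ℤ × ℤ) :
    ((if CrossesRay (p.1 + 1, p.2) a b then 1 else 0) + (if CrossesRay p a b then 1 else 0) +
      (if s(a, b) = s((p.1 + 1, p.2), (p.1 + 1, p.2 + 1)) then 1 else 0)) % 2 = 0 := by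
  obtain ⟨p1, p2⟩ := p
  obtain ⟨a1, a2⟩ := a
  obtain ⟨b1, b2⟩ := b
  split_ifs <;> simp only [CrossesRay, Sym2.eq_iff, Prod.mk.injEq] at * <;> omega

lemma crossesRay_up_add_mod_two (p : ℤ × ℤ) {a b : ℤ × ℤ} (hab : gridGraph.Adj a b) :
    ((if CrossesRay (p.1, p.2 + 1) a b then 1 else 0) + (if CrossesRay p a b then 1 else 0) +
      (if s(a, b) = s((p.1, p.2 + 1), (p.1 + 1, p.2 + 1)) then 1 else 0) +
      (if a.2 = p.2 + 1 ∧ p.1 < a.1 then 1 else 0) +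
      (if b.2 = p.2 + 1 ∧ p.1 < b.1 then 1 else 0)) % 2 = 0 := by
  obtain ⟨p1, p2⟩ := p
  obtain ⟨a1, a2⟩ := a
  obtain ⟨b1, b2⟩ := b
  rw [gridGraph_adj] at hab
  split_ifs <;> simp only [CrossesRay, Sym2.eq_iff, Prod.mk.injEq] at * <;> omega

/-- `s((p.1 + 1, p.2), (p.1 + 1, p.2 + 1))` is the edge between the squares at `p` and
`p + (1, 0)`. -/
lemma crossings_right_add_mod_two (p : ℤ × ℤ) {a b : ℤ × ℤ} (C : gridGraph.Walk a b) :
    (crossings (p.1 + 1, p.2) C + crossings p C +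
      C.edges.count s((p.1 + 1, p.2), (p.1 + 1, p.2 + 1))) % 2 = 0 := by
  induction C with
  | nil => rfl
  | @cons a b c hab C ih =>
    have := crossesRay_right_add_mod_two p a b
    simp only [crossings_cons, Walk.edges_cons, List.count_cons, beq_iff_eq]
    omega

/-- `s((p.1, p.2 + 1), (p.1 + 1, p.2 + 1))` is the edge between the squares at `p` and
`p + (0, 1)`; the last two terms record whether the endpoints of `C` lie on the half-line between
the two rays. -/
lemma crossings_up_add_mod_two (p : ℤ × ℤ) {a b : ℤ × ℤ} (C : gridGraph.Walk a b) :
    (crossings (p.1, p.2 + 1) C + crossings p C +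
      C.edges.count s((p.1, p.2 + 1), (p.1 + 1, p.2 + 1)) +
      (if a.2 = p.2 + 1 ∧ p.1 < a.1 then 1 else 0) +
      (if b.2 = p.2 + 1 ∧ p.1 < b.1 then 1 else 0)) % 2 = 0 := by
  induction C with
  | nil =>
    simp only [crossings_nil, Walk.edges_nil, List.count_nil]
    split_ifs <;> omega
  | @cons a b c hab C ih =>
    have := crossesRay_up_add_mod_two p hab
    simp only [crossings_cons, Walk.edges_cons, List.count_cons, beq_iff_eq]
    omega

lemma crossings_mod_two_eq_of_adj {c a b : ℤ × ℤ} (C : gridGraph.Walk c c)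
    (hab : gridGraph.Adj a b) (ha : a ∉ C.support) (hb : b ∉ C.support) :
    crossings a C % 2 = crossings b C % 2 := by
  obtain ⟨a1, a2⟩ := a
  obtain ⟨b1, b2⟩ := b
  rw [gridGraph_adj] at hab
  have hcases : (b1, b2) = (a1 + 1, a2) ∨ (a1, a2) = (b1 + 1, b2) ∨
      (b1, b2) = (a1, a2 + 1) ∨ (a1, a2) = (b1, b2 + 1) := by
    simp only [Prod.mk.injEq]; omega
  rcases hcases with hb' | ha' | hb' | ha'
  · have := crossings_right_add_mod_two (a1, a2) C
    rw [← hb', C.count_edges_eq_zero_of_notMem_support_left _ hb] at this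
    omega
  · have := crossings_right_add_mod_two (b1, b2) C
    rw [← ha', C.count_edges_eq_zero_of_notMem_support_left _ ha] at this
    omega
  · have := crossings_up_add_mod_two (a1, a2) C
    rw [← hb', C.count_edges_eq_zero_of_notMem_support_left _ hb] at this
    omega
  · have := crossings_up_add_mod_two (b1, b2) C
    rw [← ha', C.count_edges_eq_zero_of_notMem_support_left _ ha] at this
    omega

lemma crossings_mod_two_eq_of_reachable {c : ℤ × ℤ} (C : gridGraph.Walk c c) {S : Set (ℤ × ℤ)}
    (hS : ∀ v ∈ S, v ∉ C.support) {a b : S} (hab : (gridGraph.induce S).Reachable a b) :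
    crossings a C % 2 = crossings b C % 2 := by
  obtain ⟨W⟩ := hab
  induction W with
  | nil => rfl
  | @cons a b _ hab _ ih => exact (crossings_mod_two_eq_of_adj C hab (hS a a.2) (hS b b.2)).trans ih

lemma crossings_corner_add_mod_two {c : ℤ × ℤ} (C : gridGraph.Walk c c)
    (h11 : (1, 1) ∉ C.support) :
    (crossings (1, 1) C + crossings (0, -1) C + C.edges.count s((0, 0), (1, 0))) % 2 = 0 := by
  have hup := crossings_up_add_mod_two (1, 0) C
  have hright := crossings_right_add_mod_two (0, 0) C
  have hdown := crossings_up_add_mod_two (0, -1) C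
  norm_num at hup hright hdown
  rw [C.count_edges_eq_zero_of_notMem_support_left _ h11] at hup
  rw [C.count_edges_eq_zero_of_notMem_support_right _ h11] at hright
  omega

lemma gridGraph_adj_zero_iff {a : ℤ × ℤ} :
    gridGraph.Adj 0 a ↔ a = (1, 0) ∨ a = (-1, 0) ∨ a = (0, 1) ∨ a = (0, -1) := by
  obtain ⟨a1, a2⟩ := a
  simp only [gridGraph_adj, Prod.fst_zero, Prod.snd_zero, Prod.mk.injEq]
  omega

def frameCoords (h a b p : ℤ × ℤ) : ℤ × ℤ :=
  ((p.1 - h.1) * a.1 + (p.2 - h.2) * a.2, (p.1 - h.1) * b.1 + (p.2 - h.2) * b.2)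

section Frame

variable {a b : ℤ × ℤ} (h : ℤ × ℤ)

lemma frameCoords_adj_iff (ha : gridGraph.Adj 0 a) (hb : b = (-a.2, a.1) ∨ b = (a.2, -a.1))
    {p q : ℤ × ℤ} :
    gridGraph.Adj (frameCoords h a b p) (frameCoords h a b q) ↔ gridGraph.Adj p q := by
  rcases gridGraph_adj_zero_iff.1 ha with rfl | rfl | rfl | rfl <;> rcases hb with rfl | rfl <;>
    simp only [frameCoords, gridGraph_adj] <;> omega

lemma frameCoords_injective (ha : gridGraph.Adj 0 a) (hb : b = (-a.2, a.1) ∨ b = (a.2, -a.1)) :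
    Function.Injective (frameCoords h a b) := by
  intro p q hpq
  rcases gridGraph_adj_zero_iff.1 ha with rfl | rfl | rfl | rfl <;> rcases hb with rfl | rfl <;>
    simp only [frameCoords, Prod.ext_iff] at hpq ⊢ <;> omega

def frameEmbedding (ha : gridGraph.Adj 0 a) (hb : b = (-a.2, a.1) ∨ b = (a.2, -a.1)) :
    gridGraph ↪g gridGraph :=
  ⟨⟨frameCoords h a b, frameCoords_injective h ha hb⟩, frameCoords_adj_iff h ha hb⟩

end Frame

lemma exists_corner_embedding {h u u' w : ℤ × ℤ} (hu : gridGraph.Adj h u)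
    (hu' : gridGraph.Adj h u') (huw : gridGraph.Adj u w) (hu'w : gridGraph.Adj u' w)
    (hne : u ≠ u') (hwh : w ≠ h) :
    ∃ φ : gridGraph ↪g gridGraph, φ h = (0, 0) ∧ φ u = (1, 0) ∧ φ w = (1, 1) ∧
      ∃ z, gridGraph.Adj h z ∧ z ≠ u ∧ z ≠ u' ∧ φ z = (0, -1) := by
  obtain ⟨a, rfl⟩ : ∃ a, u = h + a := ⟨u - h, by abel⟩
  obtain ⟨b, rfl⟩ : ∃ b, u' = h + b := ⟨u' - h, by abel⟩
  have ha : gridGraph.Adj 0 a := by simpa [gridGraph_adj] using hu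
  have hb : gridGraph.Adj 0 b := by simpa [gridGraph_adj] using hu'
  obtain ⟨hab, rfl⟩ : (b = (-a.2, a.1) ∨ b = (a.2, -a.1)) ∧ w = h + a + b := by
    obtain ⟨h1, h2⟩ := h
    obtain ⟨w1, w2⟩ := w
    rcases gridGraph_adj_zero_iff.1 ha with rfl | rfl | rfl | rfl <;>
      rcases gridGraph_adj_zero_iff.1 hb with rfl | rfl | rfl | rfl <;>
      simp [gridGraph_adj, Prod.ext_iff] at huw hu'w hne hwh ⊢ <;> omega
  refine ⟨frameEmbedding h ha hab, ?_, ?_, ?_, h - b, ?_, ?_, ?_, ?_⟩ <;>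
    rcases gridGraph_adj_zero_iff.1 ha with rfl | rfl | rfl | rfl <;> rcases hab with rfl | rfl <;>
    simp [frameEmbedding, frameCoords, gridGraph_adj, Prod.ext_iff] <;> omega

lemma not_reachable_of_hall {R : Set (ℤ × ℤ)} (hRc : (gridGraph.induce Rᶜ).Preconnected)
    {h u u' w : ℤ × ℤ} (hhR : h ∈ R) (hne : u ≠ u') (hnbrs : nbrsIn R h = {u, u'})
    (hwR : w ∉ R) (huw : gridGraph.Adj u w) (hu'w : gridGraph.Adj u' w)
    (hu : u ∈ R \ {h}) (hu' : u' ∈ R \ {h}) :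
    ¬ (gridGraph.induce (R \ {h})).Reachable ⟨u, hu⟩ ⟨u', hu'⟩ := by
  rintro ⟨W⟩
  have hhu : gridGraph.Adj h u := (hnbrs.symm ▸ Set.mem_insert u {u'} : u ∈ nbrsIn R h).2
  have hhu' : gridGraph.Adj h u' := (hnbrs.symm ▸ Set.mem_insert_of_mem u rfl : u' ∈ nbrsIn R h).2
  obtain ⟨φ, hφh, hφu, hφw, z, hhz, hzu, hzu', hφz⟩ :=
    exists_corner_embedding hhu hhu' huw hu'w hne (ne_of_mem_of_not_mem hhR hwR).symm
  have hzR : z ∉ R := fun hz => by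
    have hz' : z ∈ nbrsIn R h := ⟨hz, hhz⟩
    rw [hnbrs] at hz'
    rcases hz' with rfl | rfl <;> contradiction
  let W' := W.map (Embedding.induce (R \ {h})).toHom
  have hW' : ∀ v ∈ W'.support, v ∈ R \ {h} := by
    simp only [W', Walk.support_map, List.mem_map]
    rintro _ ⟨v, -, rfl⟩
    exact v.2
  obtain ⟨C, hCsupp, hChu⟩ :=
    Walk.exists_loop_of_adj_of_adj hhu hhu' hne W' fun hh => (hW' h hh).2 rfl
  have hCR : ∀ v ∈ C.support, v ∈ R := fun v hv => by
    rcases List.mem_cons.1 (hCsupp hv) with rfl | hv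
    exacts [hhR, (hW' v hv).1]
  let D := C.map φ.toHom
  have hD : ∀ v ∈ φ '' Rᶜ, v ∉ D.support := by
    rintro _ ⟨v, hv, rfl⟩ hvD
    simp only [D, Walk.support_map, List.mem_map] at hvD
    obtain ⟨v', hv', hvv'⟩ := hvD
    exact hv (φ.injective hvv' ▸ hCR v' hv')
  have hDcount : D.edges.count s((0, 0), (1, 0)) = 1 := by
    rw [Walk.edges_map, ← hφh, ← hφu]
    exact (List.count_map_of_injective _ _ (Sym2.map.injective φ.injective) s(h, u)).trans hChu
  have hsame : crossings (φ w) D % 2 = crossings (φ z) D % 2 :=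
    crossings_mod_two_eq_of_reachable D hD
      ((hRc ⟨w, hwR⟩ ⟨z, hzR⟩).map (induceHom φ.toHom (Set.mapsTo_image φ Rᶜ)))
  have hcorner := crossings_corner_add_mod_two D (hφw ▸ hD _ ⟨w, hwR, rfl⟩)
  rw [← hφw, ← hφz] at hcorner
  omega

theorem hall_deletion_two_components_general (R : Set (ℤ × ℤ))
    (hsc : SimplyConnected R) (h u u' : ℤ × ℤ) (hhR : h ∈ R) (hne : u ≠ u')
    (hnbrs : nbrsIn R h = {u, u'})
    (hdiag : ∃ w : ℤ × ℤ, w ∉ R ∧ gridGraph.Adj u w ∧ gridGraph.Adj u' w)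
    (hu : u ∈ R \ {h}) (hu' : u' ∈ R \ {h}) :
    (gridGraph.induce (R \ {h})).connectedComponentMk ⟨u, hu⟩ ≠
        (gridGraph.induce (R \ {h})).connectedComponentMk ⟨u', hu'⟩ ∧
      ∀ x : ↥(R \ {h}),
        (gridGraph.induce (R \ {h})).connectedComponentMk x =
            (gridGraph.induce (R \ {h})).connectedComponentMk ⟨u, hu⟩ ∨
          (gridGraph.induce (R \ {h})).connectedComponentMk x =
            (gridGraph.induce (R \ {h})).connectedComponentMk ⟨u', hu'⟩ := by
  obtain ⟨w, hwR, huw, hu'w⟩ := hdiag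
  refine ⟨fun hcc => not_reachable_of_hall hsc.2.preconnected hhR hne hnbrs hwR huw hu'w hu hu'
    (ConnectedComponent.exact hcc), fun x => ?_⟩
  obtain ⟨W⟩ := hsc.1.preconnected ⟨x, x.2.1⟩ ⟨h, hhR⟩
  obtain ⟨n, hn, hnh, hxn⟩ := exists_adj_reachable_induce_diff_of_walk W rfl x.2
  have hn' : n ∈ nbrsIn R h := ⟨hn.1, hnh.symm⟩
  rw [hnbrs] at hn'
  rcases hn' with rfl | rfl
  · exact .inl (ConnectedComponent.sound hxn)
  · exact .inr (ConnectedComponent.sound hxn)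

/-- Deleting a hall `h` from a finite simply connected region leaves exactly two connected
components, one containing each of the two neighbors `u`, `u'` of `h`; in particular every
connected component of `R \ {h}` contains a neighbor of `h`. -/
theorem hall_deletion_two_components (R : Set (ℤ × ℤ)) (hfin : R.Finite)
    (hsc : SimplyConnected R) (h u u' : ℤ × ℤ) (hhR : h ∈ R) (hne : u ≠ u')
    (hnbrs : nbrsIn R h = {u, u'})
    (hdiag : ∃ w : ℤ × ℤ, w ∉ R ∧ gridGraph.Adj u w ∧ gridGraph.Adj u' w)
    (hu : u ∈ R \ {h}) (hu' : u' ∈ R \ {h}) :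
    (gridGraph.induce (R \ {h})).connectedComponentMk ⟨u, hu⟩ ≠
        (gridGraph.induce (R \ {h})).connectedComponentMk ⟨u', hu'⟩ ∧
      ∀ x : ↥(R \ {h}),
        (gridGraph.induce (R \ {h})).connectedComponentMk x =
            (gridGraph.induce (R \ {h})).connectedComponentMk ⟨u, hu⟩ ∨
          (gridGraph.induce (R \ {h})).connectedComponentMk x =
            (gridGraph.induce (R \ {h})).connectedComponentMk ⟨u', hu'⟩ :=
  hall_deletion_two_components_general R hsc h u u' hhR hne hnbrs hdiag hu hu'
end
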